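/- For non-negative integers a, b, c, the q-Chu–Vandermonde identity holds: [a+b choose c]_q = Σ_{k=0}^{c} q^{k(b-c+k)} [a choose k]_q [b choose c-k]_q, where q-binomial coefficients are taken to be 0 when out of range. -/

import Mathlib

open Polynomial

/-- The `q`-factorial `[n]! = ∏_{i=1}^n (1 + q + ⋯ + q^{i-1})` in `ℚ(q)`. -/
noncomputable def qFac (n : ℕ) : RatFunc ℚ :=
  ∏ i ∈ Finset.range n, ∑ j ∈ Finset.range (i + 1), RatFunc.X ^ j

/-- The Gaussian binomial coefficient `[n choose m]_q`, zero when out of range. -/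
noncomputable def qBinom (n m : ℕ) : RatFunc ℚ :=
  if m ≤ n then qFac n / (qFac (n - m) * qFac m) else 0

/-! Induction on `a`: the `q`-Pascal rule `[n+1, k+1] = [n, k+1] + q^(n-k) [n, k]`, which comes from
splitting `[n+1]_q = [n-k]_q + q^(n-k) [k+1]_q`, expands `[a+1+b, c+1]` on the left and each
`[a+1, k+1]` on the right; the two halves of the right-hand side are then the induction
hypotheses for `c+1` and for `c`, the second multiplied by `q^(a+b-c)`. -/

open Finset

noncomputable def qInt (n : ℕ) : RatFunc ℚ := ∑ j ∈ range n, RatFunc.X ^ j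

lemma qInt_add (m n : ℕ) : qInt (m + n) = qInt m + RatFunc.X ^ m * qInt n := by
  simp only [qInt, sum_range_add, mul_sum, pow_add]

lemma qInt_succ_ne_zero (n : ℕ) : qInt (n + 1) ≠ 0 := by
  have hpoly : (∑ j ∈ range (n + 1), (X : ℚ[X]) ^ j) ≠ 0 := fun h =>
    Nat.cast_add_one_ne_zero (R := ℚ) n (by simpa [eval_finsetSum] using congrArg (eval 1) h)
  intro h
  apply hpoly
  apply RatFunc.algebraMap_injective ℚ
  simpa [map_sum, qInt] using h

lemma qFac_zero : qFac 0 = 1 := prod_range_zero _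

lemma qFac_succ (n : ℕ) : qFac (n + 1) = qFac n * qInt (n + 1) := prod_range_succ _ n

lemma qFac_ne_zero (n : ℕ) : qFac n ≠ 0 :=
  prod_ne_zero_iff.mpr fun i _ => qInt_succ_ne_zero i

lemma qBinom_add_right (m k : ℕ) : qBinom (m + k) k = qFac (m + k) / (qFac m * qFac k) := by
  rw [qBinom, if_pos (Nat.le_add_left k m), Nat.add_sub_cancel]

lemma qBinom_self (n : ℕ) : qBinom n n = 1 := by
  simpa [qFac_zero, qFac_ne_zero] using qBinom_add_right 0 n

lemma qBinom_zero_right (n : ℕ) : qBinom n 0 = 1 := by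
  simpa [qFac_zero, qFac_ne_zero] using qBinom_add_right n 0

lemma qBinom_of_lt {n k : ℕ} (h : n < k) : qBinom n k = 0 := if_neg (Nat.not_le.mpr h)

lemma qBinom_succ_succ (n k : ℕ) :
    qBinom (n + 1) (k + 1) = qBinom n (k + 1) + RatFunc.X ^ ((n : ℤ) - k) * qBinom n k := by
  rcases lt_trichotomy k n with hlt | rfl | hgt
  · obtain ⟨m, hm⟩ : ∃ m, n = k + 1 + m := ⟨n - k - 1, by omega⟩
    have hexp : (n : ℤ) - k = ((m + 1 : ℕ) : ℤ) := by omega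
    have hqInt : qInt (n + 1) = qInt (m + 1) + RatFunc.X ^ (m + 1) * qInt (k + 1) := by
      rw [← qInt_add]; congr 1; omega
    simp only [qBinom, if_pos (Nat.succ_le_of_lt hlt), if_pos hlt.le,
      if_pos (Nat.succ_le_succ hlt.le)]
    rw [hexp, zpow_natCast, show n + 1 - (k + 1) = m + 1 by omega, show n - (k + 1) = m by omega,
      show n - k = m + 1 by omega, qFac_succ n, qFac_succ m, qFac_succ k, hqInt]
    field_simp [qFac_ne_zero, qInt_succ_ne_zero]
  · simp [qBinom_self, qBinom_of_lt (Nat.lt_succ_self k)]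
  · rw [qBinom_of_lt (by omega : n + 1 < k + 1), qBinom_of_lt (by omega : n < k + 1),
      qBinom_of_lt hgt, mul_zero, add_zero]

noncomputable def chuVandermondeTerm (a b c k : ℕ) : RatFunc ℚ :=
  RatFunc.X ^ ((k : ℤ) * ((b : ℤ) - (c : ℤ) + (k : ℤ))) * qBinom a k * qBinom b (c - k)

lemma chuVandermondeTerm_zero_left {b c k : ℕ} (hk : k ≠ 0) :
    chuVandermondeTerm 0 b c k = 0 := by
  rw [chuVandermondeTerm, qBinom_of_lt (Nat.pos_of_ne_zero hk), mul_zero, zero_mul]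

lemma chuVandermondeTerm_succ_zero (a b c : ℕ) :
    chuVandermondeTerm (a + 1) b c 0 = chuVandermondeTerm a b c 0 := by
  simp [chuVandermondeTerm, qBinom_zero_right]

lemma chuVandermondeTerm_succ_succ (a b c k : ℕ) :
    chuVandermondeTerm (a + 1) b (c + 1) (k + 1) =
      chuVandermondeTerm a b (c + 1) (k + 1) +
        RatFunc.X ^ ((a : ℤ) + b - c) * chuVandermondeTerm a b c k := by
  have hexp : (RatFunc.X : RatFunc ℚ) ^ (((k + 1 : ℕ) : ℤ) * (b - (c + 1 : ℕ) + (k + 1 : ℕ))) *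
      RatFunc.X ^ ((a : ℤ) - k) =
        RatFunc.X ^ ((a : ℤ) + b - c) * RatFunc.X ^ ((k : ℤ) * (b - c + k)) := by
    rw [← zpow_add₀ RatFunc.X_ne_zero, ← zpow_add₀ RatFunc.X_ne_zero]
    congr 1
    push_cast
    ring
  simp only [chuVandermondeTerm, qBinom_succ_succ, Nat.add_sub_add_right]
  linear_combination qBinom a k * qBinom b (c - k) * hexp

theorem q_chu_vandermonde (a b c : ℕ) :
    qBinom (a + b) c =
      ∑ k ∈ Finset.range (c + 1),
        RatFunc.X ^ ((k : ℤ) * ((b : ℤ) - (c : ℤ) + (k : ℤ))) *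
          qBinom a k * qBinom b (c - k) := by
  change qBinom (a + b) c = ∑ k ∈ range (c + 1), chuVandermondeTerm a b c k
  induction a generalizing c with
  | zero =>
    rw [sum_eq_single_of_mem 0 (by simp) fun k _ hk => chuVandermondeTerm_zero_left hk]
    simp [chuVandermondeTerm, qBinom_zero_right]
  | succ a ih =>
    cases c with
    | zero => simp [chuVandermondeTerm, qBinom_zero_right]
    | succ c =>
      have hpascal : qBinom (a + 1 + b) (c + 1) =
          qBinom (a + b) (c + 1) + RatFunc.X ^ ((a : ℤ) + b - c) * qBinom (a + b) c := by
        rw [Nat.add_right_comm, qBinom_succ_succ, Nat.cast_add]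
      rw [hpascal, ih, ih, sum_range_succ' _ (c + 1), sum_range_succ' _ (c + 1), mul_sum]
      simp only [chuVandermondeTerm_succ_succ, sum_add_distrib, chuVandermondeTerm_succ_zero]
      ring
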